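/- For every k ≥ 2, the price of anarchy of any diversity-seeking jump game with n strategic agents of k asymmetric types (each type nonempty) and no stubborn agents is at most n/(k−1): every pure Nash equilibrium has social welfare at least k−1. -/

import Mathlib

open Finset

variable {V τ : Type}

open Classical in
noncomputable def occNbrs [Fintype V] (G : SimpleGraph V) (C : V → Option τ) (v : V) :
    Finset V :=
  Finset.univ.filter (fun u => G.Adj v u ∧ (C u).isSome)

open Classical in
noncomputable def diffNbrs [Fintype V] (G : SimpleGraph V) (C : V → Option τ) (v : V)
    (t : τ) : Finset V :=
  Finset.univ.filter (fun u => G.Adj v u ∧ ∃ s, C u = some s ∧ s ≠ t)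

/-- Utility of the agent at node `v`: fraction of occupied neighbors of different type. -/
noncomputable def util [Fintype V] (G : SimpleGraph V) (C : V → Option τ) (v : V) : ℚ :=
  match C v with
  | none => 0
  | some t =>
      if (occNbrs G C v).card = 0 then 0
      else ((diffNbrs G C v t).card : ℚ) / ((occNbrs G C v).card : ℚ)

/-- The assignment after the agent at `u` jumps to node `w`. -/
def move [DecidableEq V] (C : V → Option τ) (u w : V) : V → Option τ :=
  fun x => if x = w then C u else if x = u then none else C x

/-- An improving move: the agent at `u` jumps to the empty node `w`, strictly increasing
its utility. -/
def Improves [Fintype V] [DecidableEq V] (G : SimpleGraph V) (C : V → Option τ)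
    (u w : V) : Prop :=
  (C u).isSome ∧ C w = none ∧ util G C u < util G (move C u w) w

/-- Pure Nash equilibrium: no agent can strictly improve by jumping to an empty node. -/
def IsEquil [Fintype V] [DecidableEq V] (G : SimpleGraph V) (C : V → Option τ) : Prop :=
  ∀ u w : V, (C u).isSome → C w = none → util G (move C u w) w ≤ util G C u

/-- Social welfare: sum of agents' utilities. -/
noncomputable def SW [Fintype V] (G : SimpleGraph V) (C : V → Option τ) : ℚ :=
  ∑ v, util G C v

open Classical in
noncomputable def pw (C : V → Option τ) (m : ℚ) (u v : V) : ℚ :=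
  if (C u).isNone ∨ (C v).isNone then m
  else if C u = C v then 1 else 0

open Classical in
/-- The potential function: sum over edges, weight 1 for same-type endpoints,
`m` if an endpoint is unoccupied, 0 for different-type endpoints. -/
noncomputable def potential [Fintype V] (G : SimpleGraph V) (C : V → Option τ)
    (m : ℚ) : ℚ :=
  (∑ p : V × V, if G.Adj p.1 p.2 then pw C m p.1 p.2 else 0) / 2

open Classical in
noncomputable def countType [Fintype V] (C : V → Option τ) (t : τ) : ℕ :=
  (Finset.univ.filter (fun v => C v = some t)).card

open Classical in
noncomputable def emptyCount [Fintype V] (C : V → Option τ) : ℕ :=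
  (Finset.univ.filter (fun v => C v = none)).card

/-!
Since `G` is connected and has both an occupied and an empty node, some empty node `w` has
`d > 0` occupied neighbours. Fix one agent `u_t` of each type `t`. In equilibrium `u_t` does not
gain by jumping to `w`, where it would see the `D_t` neighbours of `w` not of type `t` among at
most `d` occupied ones; hence `util u_t ≥ D_t / d`. Every occupied neighbour of `w` differs in
type from exactly `k - 1` of the `u_t`, so `∑ D_t = (k - 1) d`, and the welfare is at least
`∑ util u_t ≥ k - 1`.
-/

section

variable [Fintype V]

lemma util_nonneg (G : SimpleGraph V) (C : V → Option τ) (v : V) : 0 ≤ util G C v := by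
  unfold util
  split <;> positivity

lemma util_of_eq_some (G : SimpleGraph V) {C : V → Option τ} {v : V} {t : τ}
    (hv : C v = some t) :
    util G C v = ((diffNbrs G C v t).card : ℚ) / (occNbrs G C v).card := by
  -- no side condition: an agent without occupied neighbours has utility `0 = n / 0` in `ℚ`
  simp +contextual [util, hv]

open Classical in
lemma diffNbrs_eq_filter (G : SimpleGraph V) (C : V → Option τ) (v : V) (t : τ) :
    diffNbrs G C v t = (occNbrs G C v).filter (fun x => C x ≠ some t) := by
  ext x
  cases hx : C x <;> simp [diffNbrs, occNbrs, hx]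

lemma occNbrs_move [DecidableEq V] (G : SimpleGraph V) (C : V → Option τ) (u w : V) :
    occNbrs G (move C u w) w = (occNbrs G C w).erase u := by
  ext x
  rcases eq_or_ne x w with rfl | hxw
  · simp [occNbrs]
  · simp only [occNbrs, Finset.mem_filter, Finset.mem_erase, Finset.mem_univ, true_and]
    rcases eq_or_ne x u with rfl | hxu <;> simp [move, *]

lemma diffNbrs_move [DecidableEq V] (G : SimpleGraph V) (C : V → Option τ) (u w : V)
    (t : τ) : diffNbrs G (move C u w) w t = (diffNbrs G C w t).erase u := by
  ext x
  rcases eq_or_ne x w with rfl | hxw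
  · simp [diffNbrs]
  · simp only [diffNbrs, Finset.mem_filter, Finset.mem_erase, Finset.mem_univ, true_and]
    rcases eq_or_ne x u with rfl | hxu <;> simp [move, *]

lemma IsEquil.diffNbrs_div_le_util [DecidableEq V] {G : SimpleGraph V} {C : V → Option τ}
    (heq : IsEquil G C) {u w : V} {t : τ} (hu : C u = some t) (hw : C w = none) :
    ((diffNbrs G C w t).card : ℚ) / (occNbrs G C w).card ≤ util G C u := by
  classical
  refine le_trans ?_ (heq u w (by simp [hu]) hw)
  have hmove : move C u w w = some t := by simp [move, hu]
  have hu_notMem : u ∉ diffNbrs G C w t := by simp [diffNbrs_eq_filter, hu]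
  rw [util_of_eq_some G hmove, occNbrs_move, diffNbrs_move, Finset.erase_eq_of_notMem hu_notMem]
  rcases Nat.eq_zero_or_pos (diffNbrs G C w t).card with h0 | hpos
  · simp [h0]
  have hsub : diffNbrs G C w t ⊆ (occNbrs G C w).erase u :=
    Finset.subset_erase.mpr ⟨diffNbrs_eq_filter G C w t ▸ Finset.filter_subset _ _, hu_notMem⟩
  apply div_le_div_of_nonneg_left (by positivity)
  · exact_mod_cast hpos.trans_le (Finset.card_le_card hsub)
  · exact_mod_cast Finset.card_erase_le

lemma sum_card_diffNbrs [Fintype τ] (G : SimpleGraph V) (C : V → Option τ) (v : V) :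
    ∑ t, ((diffNbrs G C v t).card : ℚ) = (Fintype.card τ - 1) * (occNbrs G C v).card := by
  classical
  simp only [diffNbrs_eq_filter, Finset.card_filter, Nat.cast_sum]
  rw [Finset.sum_comm, Finset.sum_congr rfl, Finset.sum_const, nsmul_eq_mul, mul_comm]
  intro x hx
  obtain ⟨s, hs⟩ := Option.isSome_iff_exists.mp (Finset.mem_filter.mp hx).2.2
  simp [hs, Finset.sum_ite, Finset.filter_ne, Nat.cast_pred (Fintype.card_pos_iff.mpr ⟨s⟩)]

lemma exists_empty_adj_occupied {G : SimpleGraph V} (hG : G.Preconnected) {C : V → Option τ}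
    {a b : V} (ha : (C a).isSome) (hb : C b = none) :
    ∃ w, C w = none ∧ (occNbrs G C w).Nonempty := by
  obtain ⟨d, -, hd₁, hd₂⟩ :=
    (hG a b).some.exists_boundary_dart {x | (C x).isSome} ha (by simp [hb])
  rw [Set.mem_ofPred_eq] at hd₁
  refine ⟨d.snd, by simpa using hd₂, d.fst, ?_⟩
  simp [occNbrs, d.adj.symm, hd₁]

lemma sum_util_le_SW (G : SimpleGraph V) (C : V → Option τ) [Fintype τ] {f : τ → V}
    (hf : Function.Injective f) : ∑ t, util G C (f t) ≤ SW G C := by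
  classical
  rw [SW, ← Finset.sum_image hf.injOn]
  exact Finset.sum_le_sum_of_subset_of_nonneg (Finset.subset_univ _)
    fun v _ _ => util_nonneg G C v

end

/-- With k ≥ 2 asymmetric (nonempty) types, every pure Nash equilibrium has
social welfare at least k − 1; since the optimum is at most n, the price of anarchy is
at most n/(k−1). -/
theorem stmt5 {V τ : Type} [Fintype V] [DecidableEq V] [Fintype τ]
    (G : SimpleGraph V) (hconn : G.Connected)
    (hk : 2 ≤ Fintype.card τ)
    (C : V → Option τ)
    (htypes : ∀ t : τ, ∃ v, C v = some t)
    (hempty : ∃ v, C v = none)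
    (heq : IsEquil G C) :
    (Fintype.card τ : ℚ) - 1 ≤ SW G C := by
  obtain ⟨t₀⟩ : Nonempty τ := Fintype.card_pos_iff.mp (by omega)
  choose agent hagent using htypes
  have hinj : Function.Injective agent := fun s t h =>
    Option.some.inj ((hagent s).symm.trans (h ▸ hagent t))
  obtain ⟨b, hb⟩ := hempty
  obtain ⟨w, hw, hocc⟩ :=
    exists_empty_adj_occupied hconn.preconnected (a := agent t₀) (by simp [hagent]) hb
  have hd : ((occNbrs G C w).card : ℚ) ≠ 0 := by exact_mod_cast hocc.card_pos.ne'
  calc (Fintype.card τ : ℚ) - 1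
      = ∑ t, ((diffNbrs G C w t).card : ℚ) / (occNbrs G C w).card := by
        rw [← Finset.sum_div, sum_card_diffNbrs, mul_div_cancel_right₀ _ hd]
    _ ≤ ∑ t, util G C (agent t) :=
        Finset.sum_le_sum fun t _ => heq.diffNbrs_div_le_util (hagent t) hw
    _ ≤ SW G C := sum_util_le_SW G C hinj
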